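/- arXiv:2202.07099 — 2 statements merged into one kernel-verified Lean document; each statement's English description precedes it below -/
import Mathlib

section
/- Let F = [D; I] be the stacked first-difference and identity matrix on ℝᵀ, let θ ∈ ℝᵀ, let 𝒜 be the set of row indices i of F with (Fθ)_i ≠ 0, and let F_{−𝒜} be F with the rows in 𝒜 removed. Then the nullity of F_{−𝒜} equals the number of nonzero fused groups of θ: 𝟙{θ₁ ≠ 0} + Σ_{k=2}^{T} 𝟙{θ_k ≠ θ_{k−1} and θ_k ≠ 0}. -/
/-! The rows of `F_{-𝒜}` are the difference rows with `θₖ = θₖ₊₁` and the identity rows with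
`θₜ = 0`, so its kernel consists of the vectors that are constant on every run of equal
consecutive values of `θ` and vanish on the runs where `θ = 0`. Such a vector is determined by
its values at the first indices of the nonzero runs, and these values are free. -/

section RunStart

variable {α β : Type*} [DecidableEq α] {n : ℕ} (f : Fin (n + 1) → α)

/-- The first index of the maximal run of equal consecutive values of `f` that contains `t`. -/
def runStart : Fin (n + 1) → Fin (n + 1) :=
  Fin.induction (motive := fun _ => Fin (n + 1)) 0
    fun k s => if f k.succ = f k.castSucc then s else k.succ

@[simp]
lemma runStart_zero : runStart f 0 = 0 :=
  Fin.induction_zero (motive := fun _ => Fin (n + 1)) _ _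

lemma runStart_succ (k : Fin n) :
    runStart f k.succ = if f k.succ = f k.castSucc then runStart f k.castSucc else k.succ :=
  Fin.induction_succ (motive := fun _ => Fin (n + 1)) _ _ k

lemma runStart_le (t : Fin (n + 1)) : runStart f t ≤ t := by
  induction t using Fin.induction with
  | zero => simp
  | succ k ih =>
    rw [runStart_succ]
    split_ifs
    · exact ih.trans Fin.castSucc_lt_succ.le
    · exact le_rfl

lemma runStart_succ_eq_self_iff (k : Fin n) :
    runStart f k.succ = k.succ ↔ f k.succ ≠ f k.castSucc := by
  rw [runStart_succ]
  split_ifs with h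
  · refine iff_of_false (fun h' => ?_) (not_not.2 h)
    exact not_le.2 Fin.castSucc_lt_succ (h' ▸ runStart_le f k.castSucc)
  · exact iff_of_true rfl h

lemma runStart_runStart (t : Fin (n + 1)) : runStart f (runStart f t) = runStart f t := by
  induction t using Fin.induction with
  | zero => simp
  | succ k ih =>
    rw [runStart_succ]
    split_ifs with h
    · exact ih
    · exact (runStart_succ_eq_self_iff f k).2 h

lemma forall_apply_runStart_eq_iff (v : Fin (n + 1) → β) :
    (∀ t, v (runStart f t) = v t) ↔
      ∀ k : Fin n, f k.succ = f k.castSucc → v k.succ = v k.castSucc := by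
  constructor
  · intro hv k hk
    rw [← hv k.succ, ← hv k.castSucc, runStart_succ, if_pos hk]
  · intro hv t
    induction t using Fin.induction with
    | zero => simp
    | succ k ih =>
      rw [runStart_succ]
      split_ifs with h
      · rw [ih, hv k h]
      · rfl

lemma apply_runStart (t : Fin (n + 1)) : f (runStart f t) = f t :=
  (forall_apply_runStart_eq_iff f f).2 (fun _ h => h) t

lemma card_runStart_fixedPoints [Zero α] :
    Nat.card {s // runStart f s = s ∧ ¬ f s = 0} =
      (if f 0 ≠ 0 then 1 else 0) +
        ∑ k : Fin n, if f k.succ ≠ f k.castSucc ∧ f k.succ ≠ 0 then 1 else 0 := by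
  rw [Nat.card_eq_fintype_card, Fintype.card_subtype, Finset.card_filter, Fin.sum_univ_succ]
  simp only [runStart_zero, runStart_succ_eq_self_iff, true_and]

end RunStart

/-- Such a `v` is determined by its (free) values at the fixed points of `g` outside `Z`. -/
theorem finrank_eq_card_fixedPoints_of_mem_iff {K ι : Type*} [Ring K] [StrongRankCondition K]
    [Fintype ι]
    (g : ι → ι) (hg : ∀ t, g (g t) = g t) (Z : ι → Prop) (hZ : ∀ t, Z (g t) ↔ Z t)
    (W : Submodule K (ι → K))
    (hW : ∀ v, v ∈ W ↔ (∀ t, v (g t) = v t) ∧ ∀ t, Z t → v t = 0) :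
    Module.finrank K W = Nat.card {s // g s = s ∧ ¬ Z s} := by
  classical
  let restrict : W →ₗ[K] ({s // g s = s ∧ ¬ Z s} → K) :=
    (LinearMap.funLeft K K Subtype.val).comp W.subtype
  have hinj : Function.Injective restrict := by
    refine (injective_iff_map_eq_zero restrict).2 fun v hv => Subtype.ext (funext fun t => ?_)
    obtain ⟨hconst, hzero⟩ := (hW v).1 v.2
    by_cases ht : Z t
    · exact hzero t ht
    · rw [← hconst t]
      exact congrFun hv ⟨g t, hg t, (hZ t).not.2 ht⟩
  have hsurj : Function.Surjective restrict := by
    intro c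
    let w : ι → K := fun t => if h : Z t then 0 else c ⟨g t, hg t, (hZ t).not.2 h⟩
    have hw : w ∈ W := by
      refine (hW w).2 ⟨fun t => ?_, fun t ht => dif_pos ht⟩
      by_cases ht : Z t
      · simp [w, ht, (hZ t).2 ht]
      · simp [w, ht, (hZ t).not.2 ht, hg]
    refine ⟨⟨w, hw⟩, funext fun ⟨s, hs, hZs⟩ => ?_⟩
    simp [restrict, w, hZs, hs]
  rw [(LinearEquiv.ofBijective restrict ⟨hinj, hsurj⟩).finrank_eq,
    Module.finrank_fintype_fun_eq_card, Nat.card_eq_fintype_card]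

lemma Matrix.mem_ker_submatrix_mulVec_eq_zero_iff {K m n : Type*} [CommSemiring K] [Fintype n]
    (M : Matrix m n K) (θ v : n → K) :
    v ∈ LinearMap.ker (M.submatrix (fun i : {i // M.mulVec θ i = 0} => i.1) id).mulVecLin ↔
      ∀ i, M.mulVec θ i = 0 → M.mulVec v i = 0 := by
  rw [LinearMap.mem_ker, Matrix.mulVecLin_apply, funext_iff]
  exact ⟨fun h i hi => h ⟨i, hi⟩, fun h i => h i.1 i.2⟩

lemma firstDiff_mulVec_apply {R : Type*} [Ring R] {n : ℕ} (D : Matrix (Fin n) (Fin (n + 1)) R)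
    (hD : ∀ k t, D k t = if t.val = k.val then 1 else if t.val = k.val + 1 then -1 else 0)
    (v : Fin (n + 1) → R) (k : Fin n) :
    D.mulVec v k = v k.castSucc - v k.succ := by
  have hrow : D k = Pi.single k.castSucc 1 - Pi.single k.succ 1 := by
    ext t
    rw [hD]
    simp only [Pi.sub_apply, Pi.single_apply, Fin.ext_iff, Fin.val_castSucc, Fin.val_succ]
    split_ifs <;> first | omega | simp
  rw [Matrix.mulVec, hrow, sub_dotProduct, single_dotProduct, single_dotProduct, one_mul, one_mul]

open Classical in
theorem stmt_15 (T : ℕ) (hT : 2 ≤ T)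
    (D : Matrix (Fin (T - 1)) (Fin T) ℝ)
    (hD : ∀ k t, D k t = if t.val = k.val then 1
        else if t.val = k.val + 1 then -1 else 0)
    (θ : Fin T → ℝ)
    (F : Matrix (Fin (T - 1) ⊕ Fin T) (Fin T) ℝ)
    (hF : F = Matrix.fromRows D (1 : Matrix (Fin T) (Fin T) ℝ)) :
    Module.finrank ℝ
        (LinearMap.ker
          (F.submatrix (fun i : {i // F.mulVec θ i = 0} => i.1) id).mulVecLin) =
      (if θ ⟨0, by omega⟩ ≠ 0 then 1 else 0) +
        ∑ k : Fin (T - 1),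
          if θ ⟨k.val + 1, by omega⟩ ≠ θ ⟨k.val, by omega⟩ ∧
              θ ⟨k.val + 1, by omega⟩ ≠ 0 then 1 else 0 := by
  obtain ⟨n, rfl⟩ : ∃ n, T = n + 1 := ⟨T - 1, by omega⟩
  have hF_mulVec (v : Fin (n + 1) → ℝ) :
      F.mulVec v = Sum.elim (fun k => v k.castSucc - v k.succ) v := by
    rw [hF, Matrix.fromRows_mulVec, Matrix.one_mulVec]
    congr 1
    exact funext (firstDiff_mulVec_apply D hD v)
  have hker (v : Fin (n + 1) → ℝ) :
      v ∈ LinearMap.ker (F.submatrix (fun i : {i // F.mulVec θ i = 0} => i.1) id).mulVecLin ↔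
        (∀ t, v (runStart θ t) = v t) ∧ ∀ t, θ t = 0 → v t = 0 := by
    rw [Matrix.mem_ker_submatrix_mulVec_eq_zero_iff, forall_apply_runStart_eq_iff, Sum.forall]
    simp only [hF_mulVec, Sum.elim_inl, Sum.elim_inr, sub_eq_zero, eq_comm]
    rfl
  rw [finrank_eq_card_fixedPoints_of_mem_iff (runStart θ) (runStart_runStart θ) (θ · = 0)
    (fun t => by rw [apply_runStart θ t]) _ hker, card_runStart_fixedPoints]
  rfl
end

section
/- (Optimism identity) Let y and y_new be i.i.d. random vectors in ℝⁿ with mean μ and componentwise variance σ² (finite second moments), with y_new independent of y, and let μ̂ = δ(y) for a measurable function δ with E‖δ(y)‖² < ∞. Then E‖y_new − μ̂‖² − E‖y − μ̂‖² = 2 Σ_{i=1}^n Cov(y_i, μ̂_i). -/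
/-!
Coordinatewise, `E (Y' - D)² = Var (Y' - D) + (E Y' - E D)²` and likewise for `Y - D`.
Since `Y'` has the law of `Y`, the means and variances of `Y` and `Y'` agree, and since `Y'` is
independent of `D = δ(Y)`, `Var (Y' - D) = Var Y + Var D`, whereas
`Var (Y - D) = Var Y + Var D - 2 cov (Y, D)`.
-/

open MeasureTheory ProbabilityTheory

section

variable {Ω : Type*} {mΩ : MeasurableSpace Ω} {μ : Measure Ω}

lemma memLp_two_apply_of_integrable_sum_sq {ι : Type*} [Fintype ι] {Y : Ω → ι → ℝ}
    (hY : AEStronglyMeasurable Y μ) (h : Integrable (fun ω => ∑ i, Y ω i ^ 2) μ) (i : ι) :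
    MemLp (fun ω => Y ω i) 2 μ := by
  have hYi : AEStronglyMeasurable (fun ω => Y ω i) μ :=
    (continuous_apply i).comp_aestronglyMeasurable hY
  refine (memLp_two_iff_integrable_sq hYi).2 <|
    h.mono' (hYi.pow 2) (ae_of_all _ fun ω => ?_)
  rw [Real.norm_eq_abs, abs_of_nonneg (sq_nonneg _)]
  exact Finset.single_le_sum (f := fun j => Y ω j ^ 2) (fun j _ => sq_nonneg _)
    (Finset.mem_univ i)

lemma integral_sq_eq_variance_add_sq [IsProbabilityMeasure μ] {Z : Ω → ℝ}
    (hZ : MemLp Z 2 μ) :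
    ∫ ω, Z ω ^ 2 ∂μ = Var[Z; μ] + (μ[Z]) ^ 2 := by
  rw [variance_eq_sub hZ]
  simp only [Pi.pow_apply, sub_add_cancel]

theorem integral_sq_sub_sub_integral_sq_sub_eq_two_mul_covariance [IsProbabilityMeasure μ]
    {X X' D : Ω → ℝ}
    (hX : MemLp X 2 μ) (hD : MemLp D 2 μ) (hid : IdentDistrib X X' μ μ)
    (hind : IndepFun X' D μ) :
    ∫ ω, (X' ω - D ω) ^ 2 ∂μ - ∫ ω, (X ω - D ω) ^ 2 ∂μ = 2 * cov[X, D; μ] := by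
  have hX' : MemLp X' 2 μ := hid.memLp_snd hX
  rw [integral_sq_eq_variance_add_sq (Z := fun ω => X' ω - D ω) (hX'.sub hD),
    integral_sq_eq_variance_add_sq (Z := fun ω => X ω - D ω) (hX.sub hD),
    variance_fun_sub hX' hD, variance_fun_sub hX hD, hind.covariance_eq_zero hX' hD,
    hid.variance_eq,
    integral_sub (hX'.integrable one_le_two) (hD.integrable one_le_two),
    integral_sub (hX.integrable one_le_two) (hD.integrable one_le_two), hid.integral_eq]
  ring

end

theorem stmt_18_general (n : ℕ) {Ω : Type*} [MeasureSpace Ω] [IsProbabilityMeasure (ℙ : Measure Ω)]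
    (y ynew : Ω → (Fin n → ℝ)) (δ : (Fin n → ℝ) → (Fin n → ℝ))
    (hδ : Measurable δ)
    (hid : IdentDistrib y ynew)
    (hindep : IndepFun y ynew)
    (μv : Fin n → ℝ) (hmean : ∀ i, ∫ ω, y ω i = μv i)
    (hy2 : Integrable (fun ω => ∑ i, (y ω i) ^ 2))
    (hδ2 : Integrable (fun ω => ∑ i, (δ (y ω) i) ^ 2)) :
    (∫ ω, ∑ i, (ynew ω i - δ (y ω) i) ^ 2) - (∫ ω, ∑ i, (y ω i - δ (y ω) i) ^ 2) =
      2 * ∑ i, ∫ ω, (y ω i - μv i) * (δ (y ω) i - ∫ ω', δ (y ω') i) := by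
  have hidi i : IdentDistrib (fun ω => y ω i) (fun ω => ynew ω i) :=
    hid.comp (measurable_pi_apply i)
  have hyL2 := memLp_two_apply_of_integrable_sum_sq hid.aemeasurable_fst.aestronglyMeasurable hy2
  have hynewL2 i := (hidi i).memLp_snd (hyL2 i)
  have hδL2 : ∀ i, MemLp (fun ω => δ (y ω) i) 2 ℙ := memLp_two_apply_of_integrable_sum_sq
    (hδ.comp_aemeasurable hid.aemeasurable_fst).aestronglyMeasurable hδ2
  have hsq {X : Ω → Fin n → ℝ} (hX : ∀ i, MemLp (fun ω => X ω i) 2 ℙ) i :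
      Integrable fun ω => (X ω i - δ (y ω) i) ^ 2 := ((hX i).sub (hδL2 i)).integrable_sq
  rw [integral_finsetSum _ fun i _ => hsq hynewL2 i, integral_finsetSum _ fun i _ => hsq hyL2 i,
    ← Finset.sum_sub_distrib, Finset.mul_sum]
  refine Finset.sum_congr rfl fun i _ => ?_
  rw [integral_sq_sub_sub_integral_sq_sub_eq_two_mul_covariance (hyL2 i) (hδL2 i) (hidi i)
      (hindep.symm.comp (measurable_pi_apply i) ((measurable_pi_apply i).comp hδ)), covariance,
    hmean i]

theorem stmt_18 (n : ℕ) {Ω : Type*} [MeasureSpace Ω] [IsProbabilityMeasure (ℙ : Measure Ω)]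
    (y ynew : Ω → (Fin n → ℝ)) (δ : (Fin n → ℝ) → (Fin n → ℝ))
    (hy : Measurable y) (hynew : Measurable ynew) (hδ : Measurable δ)
    (hid : IdentDistrib y ynew)
    (hindep : IndepFun y ynew)
    (μv : Fin n → ℝ) (hmean : ∀ i, ∫ ω, y ω i = μv i)
    (hy2 : Integrable (fun ω => ∑ i, (y ω i) ^ 2))
    (hδ2 : Integrable (fun ω => ∑ i, (δ (y ω) i) ^ 2)) :
    (∫ ω, ∑ i, (ynew ω i - δ (y ω) i) ^ 2) - (∫ ω, ∑ i, (y ω i - δ (y ω) i) ^ 2) =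
      2 * ∑ i, ∫ ω, (y ω i - μv i) * (δ (y ω) i - ∫ ω', δ (y ω') i) :=
  stmt_18_general n y ynew δ hδ hid hindep μv hmean hy2 hδ2
end
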